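/- Define learning rates α_t = (H+1)/(H+t) for t ≥ 1, and weights α_t^i = α_i · ∏_{j=i+1}^t (1 − α_j) for 1 ≤ i ≤ t. Then for every t ≥ 1: max_{i∈[t]} α_t^i ≤ 2H/t and ∑_{i=1}^t (α_t^i)² ≤ 2H/t. -/

import Mathlib

/-!
The weights satisfy `α_{t+1}^i = α_t^i (1 - α_{t+1})` and `α_t^t = α_t`. Since
`α_t (1 - α_{t+1}) = (H+1) t / ((H+t)(H+t+1)) ≤ α_{t+1}`, induction on `t` gives `α_t^i ≤ α_t`,
and `α_t ≤ 2H/t` once `H ≥ 1`. The weights are nonnegative and sum to `1 - ∏_{j ≤ t} (1 - α_j) ≤ 1`,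
so `∑ (α_t^i)² ≤ max_i α_t^i`.
-/

/-- Learning rate `α_t = (H+1)/(H+t)`. -/
noncomputable def lr (H t : ℕ) : ℝ := (H + 1) / (H + t)

/-- Weight `α_t^i = α_i ∏_{j=i+1}^t (1 - α_j)`. -/
noncomputable def lrW (H t i : ℕ) : ℝ :=
  lr H i * ∏ j ∈ Finset.Icc (i + 1) t, (1 - lr H j)

open Finset

theorem Finset.sum_Icc_mul_prod_one_sub {R : Type*} [CommRing R] (a : ℕ → R) (t : ℕ) :
    ∑ i ∈ Icc 1 t, a i * ∏ j ∈ Icc (i + 1) t, (1 - a j) = 1 - ∏ j ∈ Icc 1 t, (1 - a j) := by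
  induction t with
  | zero => simp
  | succ t ih =>
    have hstep : ∀ i ∈ Icc 1 t, a i * ∏ j ∈ Icc (i + 1) (t + 1), (1 - a j)
        = a i * (∏ j ∈ Icc (i + 1) t, (1 - a j)) * (1 - a (t + 1)) := fun i hi => by
      rw [prod_Icc_succ_top (by grind), mul_assoc]
    rw [sum_Icc_succ_top (by omega), sum_congr rfl hstep, ← sum_mul, ih,
      Icc_eq_empty (show ¬t + 1 + 1 ≤ t + 1 by omega), prod_empty, prod_Icc_succ_top (by omega)]
    ring

namespace LearningRate

lemma lr_nonneg (H t : ℕ) : 0 ≤ lr H t := by unfold lr; positivity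

lemma one_sub_lr_nonneg (H : ℕ) {t : ℕ} (ht : 1 ≤ t) : 0 ≤ 1 - lr H t := by
  have ht' : (1 : ℝ) ≤ t := by exact_mod_cast ht
  rw [lr, sub_nonneg, div_le_one (by positivity)]
  linarith

lemma lr_mul_one_sub_lr_succ_le (H t : ℕ) : lr H t * (1 - lr H (t + 1)) ≤ lr H (t + 1) := by
  rcases Nat.eq_zero_or_pos (H + t) with hHt | hHt
  · simp [lr, show H = 0 by omega, show t = 0 by omega]
  have hHt' : (0 : ℝ) < H + t := by exact_mod_cast hHt
  have hsucc : 1 - lr H (t + 1) = t / (H + t + 1) := by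
    unfold lr; push_cast; field_simp; ring
  rw [hsucc, lr, lr, div_mul_div_comm, div_le_div_iff₀ (by positivity) (by push_cast; positivity)]
  push_cast
  nlinarith [mul_nonneg (Nat.cast_nonneg (α := ℝ) H) (by positivity : (0 : ℝ) ≤ (H + 1) * (H + t + 1))]

lemma lr_le_two_mul_div {H t : ℕ} (hH : 1 ≤ H) (ht : 1 ≤ t) : lr H t ≤ 2 * H / t := by
  have hH' : (1 : ℝ) ≤ H := by exact_mod_cast hH
  have ht' : (1 : ℝ) ≤ t := by exact_mod_cast ht
  rw [lr, div_le_div_iff₀ (by positivity) (by positivity)]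
  nlinarith

lemma lrW_self (H t : ℕ) : lrW H t t = lr H t := by
  rw [lrW, Icc_eq_empty (by omega), prod_empty, mul_one]

lemma lrW_succ (H : ℕ) {t i : ℕ} (h : i ≤ t) :
    lrW H (t + 1) i = lrW H t i * (1 - lr H (t + 1)) := by
  rw [lrW, lrW, prod_Icc_succ_top (by omega), mul_assoc]

lemma lrW_nonneg (H t i : ℕ) : 0 ≤ lrW H t i :=
  mul_nonneg (lr_nonneg H i) <| prod_nonneg fun j hj =>
    one_sub_lr_nonneg H (by grind)

lemma lrW_le_lr (H : ℕ) {i t : ℕ} (hit : i ≤ t) : lrW H t i ≤ lr H t := by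
  induction t, hit using Nat.le_induction with
  | base => rw [lrW_self]
  | succ t hit ih =>
    rw [lrW_succ H hit]
    calc lrW H t i * (1 - lr H (t + 1))
        ≤ lr H t * (1 - lr H (t + 1)) :=
          mul_le_mul_of_nonneg_right ih (one_sub_lr_nonneg H (by omega))
      _ ≤ lr H (t + 1) := lr_mul_one_sub_lr_succ_le H t

lemma sum_lrW_le_one (H t : ℕ) : ∑ i ∈ Icc 1 t, lrW H t i ≤ 1 := by
  simp only [lrW]
  rw [sum_Icc_mul_prod_one_sub, sub_le_self_iff]
  exact prod_nonneg fun j hj => one_sub_lr_nonneg H (mem_Icc.mp hj).1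

end LearningRate

theorem Finset.sum_sq_le_of_le_of_sum_le_one {ι : Type*} (s : Finset ι) (w : ι → ℝ) {M : ℝ}
    (hM : 0 ≤ M) (hw : ∀ i ∈ s, 0 ≤ w i) (hwM : ∀ i ∈ s, w i ≤ M) (hsum : ∑ i ∈ s, w i ≤ 1) :
    ∑ i ∈ s, w i ^ 2 ≤ M :=
  calc ∑ i ∈ s, w i ^ 2
      ≤ ∑ i ∈ s, M * w i := sum_le_sum fun i hi => by
        rw [sq]; exact mul_le_mul_of_nonneg_right (hwM i hi) (hw i hi)
    _ = M * ∑ i ∈ s, w i := (mul_sum _ _ _).symm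
    _ ≤ M := mul_le_of_le_one_right hM hsum

open LearningRate in
theorem stmt5_general (H : ℕ) (hH : 1 ≤ H) (t : ℕ) :
    (∀ i ∈ Finset.Icc 1 t, lrW H t i ≤ 2 * H / t) ∧
    ∑ i ∈ Finset.Icc 1 t, (lrW H t i) ^ 2 ≤ 2 * H / t := by
  have hmax : ∀ i ∈ Icc 1 t, lrW H t i ≤ 2 * H / t := fun i hi => by
    obtain ⟨hi, hit⟩ := mem_Icc.mp hi
    exact (lrW_le_lr H hit).trans (lr_le_two_mul_div hH (hi.trans hit))
  exact ⟨hmax, sum_sq_le_of_le_of_sum_le_one _ _ (by positivity)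
    (fun i _ => lrW_nonneg H t i) hmax (sum_lrW_le_one H t)⟩

theorem stmt5 (H : ℕ) (hH : 1 ≤ H) (t : ℕ) (ht : 1 ≤ t) :
    (∀ i ∈ Finset.Icc 1 t, lrW H t i ≤ 2 * H / t) ∧
    ∑ i ∈ Finset.Icc 1 t, (lrW H t i) ^ 2 ≤ 2 * H / t :=
  stmt5_general H hH t
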